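/- arXiv:math/0305027 — 2 statements merged into one kernel-verified Lean document; each statement's English description precedes it below -/
import Mathlib

section
/- Let f be a strictly convex twice differentiable function defined on an open convex subset D of ℝⁿ. Then there exists a point x in D at which the Hessian of f is positive definite. -/
open Metric Filter Topology

/-! Fix `x₀ ∈ D` and a ball `closedBall x₀ R ⊆ D`. By strict convexity and compactness, `f`
exceeds its tangent plane at `x₀` by at least some `m > 0` on the sphere `sphere x₀ R`. Hence
`f x - fderiv ℝ f x₀ x - (m / R²) ‖x - x₀‖²` is no smaller on the sphere than at the centre,
and so has a local minimum `c` inside the ball. There the Hessian of `f` dominates that of the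
quadratic, `(2m / R²) ⟪·, ·⟫`, and is therefore positive definite. -/

theorem StrictConvexOn.comp_lineMap {E : Type*} [AddCommGroup E] [Module ℝ E]
    {s : Set E} {f : E → ℝ} (hf : StrictConvexOn ℝ s f) {x y : E} (hxy : x ≠ y) :
    StrictConvexOn ℝ (AffineMap.lineMap (k := ℝ) x y ⁻¹' s) (f ∘ AffineMap.lineMap x y) := by
  refine ⟨hf.1.affine_preimage (AffineMap.lineMap x y), fun a ha b hb hab μ ν hμ hν hμν => ?_⟩
  have := hf.2 ha hb ((AffineMap.lineMap_injective ℝ hxy).ne hab) hμ hν hμν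
  rw [← Convex.combo_affine_apply hμν] at this
  simpa using this

theorem IsLocalMin.deriv_deriv_nonneg {ψ : ℝ → ℝ} {a : ℝ} (h : IsLocalMin ψ a)
    (hc : ContinuousAt ψ a) : 0 ≤ deriv (deriv ψ) a := by
  by_contra! hneg
  -- a negative second derivative makes `a` a local maximum as well, so `ψ` is locally constant
  have hconst : ψ =ᶠ[𝓝 a] fun _ => ψ a :=
    (h.and (isLocalMax_of_deriv_deriv_neg hneg h.deriv_eq_zero hc)).mono
      fun x hx => le_antisymm hx.2 hx.1
  have : deriv (deriv ψ) a = 0 := by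
    rw [hconst.deriv.deriv_eq]
    simp
  exact hneg.ne this

theorem exists_isLocalMin_mem_ball {X : Type*} [PseudoMetricSpace X] [ProperSpace X]
    {g : X → ℝ} {x₀ : X} {R : ℝ} (hR : 0 < R)
    (hg : ContinuousOn g (closedBall x₀ R)) (hsphere : ∀ x ∈ sphere x₀ R, g x₀ ≤ g x) :
    ∃ c ∈ ball x₀ R, IsLocalMin g c := by
  obtain ⟨c, hc, hmin⟩ := (isCompact_closedBall x₀ R).exists_isMinOn
    ⟨x₀, mem_closedBall_self hR.le⟩ hg
  rcases (mem_closedBall.1 hc).lt_or_eq with hlt | heq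
  · exact ⟨c, hlt, hmin.isLocalMin
      (mem_of_superset (isOpen_ball.mem_nhds hlt) ball_subset_closedBall)⟩
  · exact ⟨x₀, mem_ball_self hR, IsMinOn.isLocalMin (fun x hx => (hsphere c heq).trans (hmin hx))
      (closedBall_mem_nhds x₀ hR)⟩

section NormedSpace

variable {E : Type*} [NormedAddCommGroup E] [NormedSpace ℝ E]

theorem StrictConvexOn.lt_sub_of_hasFDerivAt {s : Set E} {f : E → ℝ} {f' : E →L[ℝ] ℝ}
    {x y : E} (hf : StrictConvexOn ℝ s f) (hx : x ∈ s) (hy : y ∈ s) (hxy : x ≠ y)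
    (hf' : HasFDerivAt f f' x) : f' (y - x) < f y - f x := by
  have hline : HasDerivAt (f ∘ AffineMap.lineMap (k := ℝ) x y) (f' (y - x)) 0 := by
    have : HasFDerivAt f f' (AffineMap.lineMap x y (0 : ℝ)) := by simpa using hf'
    exact this.comp_hasDerivAt 0 AffineMap.hasDerivAt_lineMap
  simpa [slope_def_field] using
    (hf.comp_lineMap hxy).lt_slope_of_hasDerivAt (x := 0) (y := 1)
      (by simpa using hx) (by simpa using hy) one_pos hline

theorem StrictConvexOn.exists_pos_le_sub_sub_of_isCompact {s K : Set E} {f : E → ℝ}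
    {f' : E →L[ℝ] ℝ} {x₀ : E} (hf : StrictConvexOn ℝ s f) (hx₀ : x₀ ∈ s)
    (hf' : HasFDerivAt f f' x₀) (hK : IsCompact K) (hKs : K ⊆ s) (hx₀K : x₀ ∉ K)
    (hfK : ContinuousOn f K) :
    ∃ m > 0, ∀ x ∈ K, m ≤ f x - f x₀ - f' (x - x₀) := by
  refine hK.exists_forall_le' ?_ fun x hx => ?_
  · fun_prop
  · have := hf.lt_sub_of_hasFDerivAt hx₀ (hKs hx) (ne_of_mem_of_not_mem hx hx₀K).symm hf'
    linarith

theorem IsLocalMin.hessian_nonneg_of_hasFDerivAt {g : E → ℝ} {g' : E → E →L[ℝ] ℝ}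
    {g'' : E →L[ℝ] E →L[ℝ] ℝ} {c : E} (h : IsLocalMin g c)
    (hg : ∀ᶠ x in 𝓝 c, HasFDerivAt g (g' x) x) (hg' : HasFDerivAt g' g'' c) (v : E) :
    0 ≤ g'' v v := by
  set L : ℝ → E := fun t => c + t • v
  have hL : ∀ t, HasDerivAt L v t := fun t => by
    simpa only [one_smul] using ((hasDerivAt_id' t).smul_const v).const_add c
  have hL0 : L 0 = c := by simp [L]
  have hLc : Tendsto L (𝓝 0) (𝓝 c) := hL0 ▸ (hL 0).continuousAt.tendsto
  have hderiv : deriv (g ∘ L) =ᶠ[𝓝 0] fun t => g' (L t) v :=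
    (hLc.eventually hg.eventually_nhds).mono fun t ht =>
      (ht.self_of_nhds.comp_hasDerivAt t (hL t)).deriv
  have hderiv2 : HasDerivAt (fun t => g' (L t) v) (g'' v v) 0 := by
    have : HasFDerivAt g' g'' (L 0) := hL0 ▸ hg'
    exact ((this.comp_hasDerivAt 0 (hL 0)).clm_apply (hasDerivAt_const 0 v)).congr_deriv
      (by simp)
  have hmin : IsLocalMin (g ∘ L) 0 := (hL0 ▸ h).comp_continuous (hL 0).continuousAt
  have hcont : ContinuousAt (g ∘ L) 0 :=
    (hL0 ▸ hg.self_of_nhds.continuousAt).comp (hL 0).continuousAt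
  simpa [hderiv.deriv_eq, hderiv2.deriv] using hmin.deriv_deriv_nonneg hcont

end NormedSpace

theorem IsLocalMin.two_mul_norm_sq_le_fderiv_fderiv {E : Type*} [NormedAddCommGroup E]
    [InnerProductSpace ℝ E] {f : E → ℝ} {ℓ : E →L[ℝ] ℝ} {x₀ c : E} {s : ℝ}
    (hmin : IsLocalMin (fun x => f x - ℓ x - s * ‖x - x₀‖ ^ 2) c) (hf : ContDiffAt ℝ 2 f c)
    (v : E) : 2 * s * ‖v‖ ^ 2 ≤ fderiv ℝ (fderiv ℝ f) c v v := by
  set B : E →L[ℝ] E →L[ℝ] ℝ := (2 * s) • innerSL ℝ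
  have hB (x w : E) : B x w = 2 * s * inner ℝ x w := rfl
  have hg : ∀ᶠ x in 𝓝 c, HasFDerivAt (fun x => f x - ℓ x - s * ‖x - x₀‖ ^ 2)
      (fderiv ℝ f x - ℓ - B (x - x₀)) x := by
    filter_upwards [hf.eventually (by simp)] with x hx
    have hq := ((hasFDerivAt_sub_const (𝕜 := ℝ) (x := x) x₀).norm_sq).const_mul s
    refine (((hx.differentiableAt (by norm_num)).hasFDerivAt.sub ℓ.hasFDerivAt).sub hq).congr_fderiv
      ?_
    ext w
    simp only [hB, sub_apply, ContinuousLinearMap.comp_id, smul_apply, innerSL_apply_apply,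
      smul_eq_mul, nsmul_eq_mul]
    ring
  have hg' : HasFDerivAt (fun x => fderiv ℝ f x - ℓ - B (x - x₀))
      (fderiv ℝ (fderiv ℝ f) c - B) c := by
    have hf' := (hf.fderiv_right (m := 1) (by norm_num)).differentiableAt (by norm_num)
    refine ((hf'.hasFDerivAt.sub_const ℓ).sub
      (B.hasFDerivAt.comp c (hasFDerivAt_sub_const x₀))).congr_fderiv ?_
    simp
  have := hmin.hessian_nonneg_of_hasFDerivAt hg hg' v
  rw [sub_apply, sub_apply, hB, real_inner_self_eq_norm_sq] at this
  linarith

theorem strictly_convex_has_posdef_hessian_general (n : ℕ)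
    (D : Set (EuclideanSpace ℝ (Fin n))) (f : EuclideanSpace ℝ (Fin n) → ℝ)
    (hD : IsOpen D) (hDne : D.Nonempty)
    (hf : StrictConvexOn ℝ D f) (hf2 : ContDiffOn ℝ 2 f D) :
    ∃ x ∈ D, ∀ v : EuclideanSpace ℝ (Fin n), v ≠ 0 →
      0 < fderiv ℝ (fderiv ℝ f) x v v := by
  obtain ⟨x₀, hx₀⟩ := hDne
  obtain ⟨R, hR, hRD⟩ := nhds_basis_closedBall.mem_iff.1 (hD.mem_nhds hx₀)
  have hC2 : ∀ x ∈ D, ContDiffAt ℝ 2 f x := fun x hx => hf2.contDiffAt (hD.mem_nhds hx)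
  have hsD : sphere x₀ R ⊆ D := sphere_subset_closedBall.trans hRD
  obtain ⟨m, hm, hmsphere⟩ := hf.exists_pos_le_sub_sub_of_isCompact hx₀
    ((hC2 x₀ hx₀).differentiableAt (by norm_num)).hasFDerivAt (isCompact_sphere x₀ R) hsD
    (by simpa using hR.ne) (hf2.continuousOn.mono hsD)
  obtain ⟨c, hc, hmin⟩ := exists_isLocalMin_mem_ball hR
    (g := fun x => f x - fderiv ℝ f x₀ x - m / R ^ 2 * ‖x - x₀‖ ^ 2)
    (((hf2.continuousOn.mono hRD).sub (fderiv ℝ f x₀).continuous.continuousOn).sub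
      (by fun_prop)) fun x hx => by
      have := hmsphere x hx
      rw [mem_sphere_iff_norm] at hx
      simp [hx, hR.ne'] at this ⊢
      linarith
  have hcD := hRD (ball_subset_closedBall hc)
  refine ⟨c, hcD, fun v hv => ?_⟩
  calc 0 < 2 * (m / R ^ 2) * ‖v‖ ^ 2 := by have := norm_pos_iff.2 hv; positivity
    _ ≤ _ := hmin.two_mul_norm_sq_le_fderiv_fderiv (hC2 c hcD) v

theorem strictly_convex_has_posdef_hessian (n : ℕ)
    (D : Set (EuclideanSpace ℝ (Fin n))) (f : EuclideanSpace ℝ (Fin n) → ℝ)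
    (hD : IsOpen D) (hDne : D.Nonempty) (hDconv : Convex ℝ D)
    (hf : StrictConvexOn ℝ D f) (hf2 : ContDiffOn ℝ 2 f D) :
    ∃ x ∈ D, ∀ v : EuclideanSpace ℝ (Fin n), v ≠ 0 →
      0 < fderiv ℝ (fderiv ℝ f) x v v :=
  strictly_convex_has_posdef_hessian_general n D f hD hDne hf hf2
end

section
/- Let Ω ⊆ ℝⁿ be an open convex set with one-dimensional asymptotic cone spanned by a unit vector v, and suppose every section Ω ∩ (x + ℝv) for x ∈ Ω equals s(x) + {t v | t > 0} for a unique boundary point s(x). Then the map s : Ω → ∂Ω is continuous. -/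
open Set

/-- The asymptotic cone of a convex set. -/
def asymptoticCone' {n : ℕ} (Ω : Set (EuclideanSpace ℝ (Fin n))) : Set (EuclideanSpace ℝ (Fin n)) :=
  {u | ∀ x ∈ Ω, ∀ t : ℝ, 0 ≤ t → x + t • u ∈ Ω}

open Filter Topology

/-
For `x ∈ Ω` write `s x = x - τ x • v`, so that `x - t • v ∈ Ω ↔ t < τ x`. Openness of `Ω` makes
`τ` lower semicontinuous. Convexity makes it upper semicontinuous: if `τ x < c`, the point
`x - c • v` lies outside `closure Ω`, since otherwise the segment from the interior point `x` to it
would lie in `Ω` and contain `x - τ x • v ∉ Ω`; and then `x' - c • v ∉ Ω`, i.e. `τ x' ≤ c`, for all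
`x'` near `x`. Hence `τ`, and with it `s`, is continuous on `Ω`.
-/

section

variable {E : Type*} [AddCommGroup E] [Module ℝ E] {Ω : Set E} {v : E} {τ : E → ℝ}

theorem exists_sub_smul_mem_iff_of_inter_line_eq_ray {x p : E} (hv : v ≠ 0) (hx : x ∈ Ω)
    (h : Ω ∩ {y | ∃ t : ℝ, y = x + t • v} = {y | ∃ t : ℝ, 0 < t ∧ y = p + t • v}) :
    ∃ T : ℝ, p = x - T • v ∧ ∀ t : ℝ, x - t • v ∈ Ω ↔ t < T := by
  have hxray : x ∈ {y | ∃ t : ℝ, 0 < t ∧ y = p + t • v} := h ▸ ⟨hx, 0, by simp⟩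
  obtain ⟨T, -, rfl⟩ := hxray
  refine ⟨T, by simp, fun t => ?_⟩
  have hline : p + T • v - t • v = p + (T - t) • v := by rw [sub_smul, add_sub_assoc]
  have hon : p + T • v - t • v ∈ {y | ∃ t : ℝ, y = p + T • v + t • v} :=
    ⟨-t, by rw [neg_smul, ← sub_eq_add_neg]⟩
  rw [← and_iff_left hon (a := p + T • v - t • v ∈ Ω), ← mem_inter_iff, h, mem_ofPred_eq, hline]
  constructor
  · rintro ⟨u, hu, heq⟩
    rw [add_right_inj] at heq
    linarith [smul_left_injective ℝ hv heq]
  · exact fun hlt => ⟨T - t, sub_pos.2 hlt, rfl⟩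

variable [TopologicalSpace E] [IsTopologicalAddGroup E]

theorem lowerSemicontinuousOn_of_forall_sub_smul_mem_iff (hΩ : IsOpen Ω)
    (hτ : ∀ x ∈ Ω, ∀ t : ℝ, x - t • v ∈ Ω ↔ t < τ x) : LowerSemicontinuousOn τ Ω := by
  intro x hx t ht
  have hnear : ∀ᶠ x' in 𝓝 x, x' - t • v ∈ Ω :=
    (continuous_sub_right (t • v)).continuousAt.preimage_mem_nhds
      (hΩ.mem_nhds ((hτ x hx t).2 ht))
  filter_upwards [nhdsWithin_le_nhds hnear, self_mem_nhdsWithin] with x' hx' hx'Ω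
  exact (hτ x' hx'Ω t).1 hx'

variable [ContinuousConstSMul ℝ E]

theorem sub_smul_notMem_closure_of_lt (hconv : Convex ℝ Ω) (hΩ : IsOpen Ω)
    (hτ : ∀ x ∈ Ω, ∀ t : ℝ, x - t • v ∈ Ω ↔ t < τ x) {x : E} (hx : x ∈ Ω) {c : ℝ}
    (hc : τ x < c) : x - c • v ∉ closure Ω := by
  intro hcl
  have hτpos : 0 < τ x := by simpa using (hτ x hx 0).1 (by simpa using hx)
  have hcpos : 0 < c := hτpos.trans hc
  have hcombo := hconv.combo_interior_closure_mem_interior (hΩ.interior_eq.symm ▸ hx) hcl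
    (sub_pos.2 ((div_lt_one hcpos).2 hc)) (div_pos hτpos hcpos).le (sub_add_cancel 1 _)
  have heq : (1 - τ x / c) • x + (τ x / c) • (x - c • v) = x - τ x • v := by
    rw [smul_sub, smul_smul, div_mul_cancel₀ _ hcpos.ne', sub_smul, one_smul]
    abel
  rw [heq, hΩ.interior_eq, hτ x hx] at hcombo
  exact lt_irrefl _ hcombo

theorem upperSemicontinuousOn_of_forall_sub_smul_mem_iff (hconv : Convex ℝ Ω) (hΩ : IsOpen Ω)
    (hτ : ∀ x ∈ Ω, ∀ t : ℝ, x - t • v ∈ Ω ↔ t < τ x) : UpperSemicontinuousOn τ Ω := by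
  intro x hx y hy
  obtain ⟨c, hxc, hcy⟩ := exists_between hy
  have hnear : ∀ᶠ x' in 𝓝 x, x' - c • v ∈ (closure Ω)ᶜ :=
    (continuous_sub_right (c • v)).continuousAt.preimage_mem_nhds
      (isClosed_closure.isOpen_compl.mem_nhds (sub_smul_notMem_closure_of_lt hconv hΩ hτ hx hxc))
  filter_upwards [nhdsWithin_le_nhds hnear, self_mem_nhdsWithin] with x' hx' hx'Ω
  have : ¬ c < τ x' := fun h => hx' (subset_closure ((hτ x' hx'Ω c).2 h))
  linarith

theorem continuousOn_of_forall_sub_smul_mem_iff (hconv : Convex ℝ Ω) (hΩ : IsOpen Ω)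
    (hτ : ∀ x ∈ Ω, ∀ t : ℝ, x - t • v ∈ Ω ↔ t < τ x) : ContinuousOn τ Ω :=
  continuousOn_iff_lower_upperSemicontinuousOn.2
    ⟨lowerSemicontinuousOn_of_forall_sub_smul_mem_iff hΩ hτ,
      upperSemicontinuousOn_of_forall_sub_smul_mem_iff hconv hΩ hτ⟩

end

theorem basepoint_map_continuous_general {n : ℕ}
    (Ω : Set (EuclideanSpace ℝ (Fin n))) (hΩ : IsOpen Ω) (hconv : Convex ℝ Ω)
    (v : EuclideanSpace ℝ (Fin n)) (hv : ‖v‖ = 1)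
    (s : EuclideanSpace ℝ (Fin n) → EuclideanSpace ℝ (Fin n))
    (hs : ∀ x ∈ Ω, s x ∈ frontier Ω ∧
      Ω ∩ {y | ∃ t : ℝ, y = x + t • v} = {y | ∃ t : ℝ, 0 < t ∧ y = s x + t • v}) :
    ContinuousOn s Ω := by
  have hv0 : v ≠ 0 := by
    rintro rfl
    simp at hv
  choose! τ hsτ hτ using fun x hx =>
    exists_sub_smul_mem_iff_of_inter_line_eq_ray hv0 hx (hs x hx).2
  have hτc : ContinuousOn τ Ω := continuousOn_of_forall_sub_smul_mem_iff hconv hΩ hτ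
  exact (continuousOn_id.sub (hτc.smul continuousOn_const)).congr hsτ

theorem basepoint_map_continuous {n : ℕ}
    (Ω : Set (EuclideanSpace ℝ (Fin n))) (hΩ : IsOpen Ω) (hconv : Convex ℝ Ω)
    (v : EuclideanSpace ℝ (Fin n)) (hv : ‖v‖ = 1)
    (hAC : asymptoticCone' Ω = {u | ∃ t : ℝ, 0 ≤ t ∧ u = t • v})
    (s : EuclideanSpace ℝ (Fin n) → EuclideanSpace ℝ (Fin n))
    (hs : ∀ x ∈ Ω, s x ∈ frontier Ω ∧
      Ω ∩ {y | ∃ t : ℝ, y = x + t • v} = {y | ∃ t : ℝ, 0 < t ∧ y = s x + t • v}) :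
    ContinuousOn s Ω :=
  basepoint_map_continuous_general Ω hΩ hconv v hv s hs
end
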